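/- Let κ be a regular cardinal and P a κ-Knaster partial order. If T is a tree of height κ, then forcing with P adds no new cofinal branch to T: every cofinal branch of T in a P-generic extension is in the ground model. -/

import Mathlib

open Cardinal

universe u

/-- Two conditions are compatible if they have a common lower bound. -/
def Compat {P : Type u} [Preorder P] (a b : P) : Prop := ∃ c, c ≤ a ∧ c ≤ b

/-- A partial order is κ-Knaster if every subset of size κ has a subset of size κ
whose elements are pairwise compatible. -/
def IsKnaster (κ : Cardinal.{u}) (P : Type u) [Preorder P] : Prop :=
  ∀ X : Set P, #X = κ → ∃ Y ⊆ X, #Y = κ ∧ ∀ a ∈ Y, ∀ b ∈ Y, Compat a b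

/-- A tree of height κ: a partial order in which the set of predecessors of
every node is well-ordered (witnessed by the level function `lvl`), with levels
indexed by the ordinals below κ (no smallness requirement on levels). -/
structure TreeOfHeight (κ : Cardinal.{u}) where
  carrier : Type u
  po : PartialOrder carrier
  lvl : carrier → Ordinal.{u}
  lvl_lt : ∀ t, lvl t < κ.ord
  lvl_strictMono : ∀ s t, po.lt s t → lvl s < lvl t
  preds : ∀ t, ∀ β < lvl t, ∃! s, po.lt s t ∧ lvl s = β
  levels_nonempty : ∀ β < κ.ord, ∃ t, lvl t = β

/-- A cofinal branch: a chain of the tree meeting every level. -/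
def IsCofBranch {κ : Cardinal.{u}} (S : TreeOfHeight κ) (b : Set S.carrier) : Prop :=
  (∀ s ∈ b, ∀ t ∈ b, S.po.le s t ∨ S.po.le t s) ∧ ∀ β < κ.ord, ∃ t ∈ b, S.lvl t = β

/-- A `P`-name for a cofinal branch of the tree `S`: `F p t` states that the
condition `p` forces `t` to belong to the named branch. -/
structure BranchName (P : Type u) [Preorder P] {κ : Cardinal.{u}} (S : TreeOfHeight κ) where
  F : P → S.carrier → Prop
  mono : ∀ p q t, p ≤ q → F q t → F p t
  forcesChain : ∀ p s t, F p s → F p t → S.po.le s t ∨ S.po.le t s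
  cof : ∀ p : P, ∀ β < κ.ord, ∃ q, q ≤ p ∧ ∃ t, S.lvl t = β ∧ F q t

/-!
Choose, for every level α < κ, a condition `p_α ≤ p` forcing some node `t_α` of level α into the
named branch. The Knaster property makes κ many of the `p_α` pairwise compatible, so the
corresponding `t_α` are pairwise comparable and their downward closure `b` is a cofinal branch of
the ground-model tree. If no `p_α` forced the named branch into `b`, there would be `r_α ≤ p_α`
forcing nodes `s_α ∉ b`; applying the Knaster property to the `r_α` gives compatible `r_α`, `r_β`
with `t_β` above the level of `s_α`, and a common extension forces `s_α` and `t_β` to be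
comparable, which puts `s_α` in `b`.
-/

open Ordinal

theorem IsKnaster.exists_subset_pairwise_compat {κ : Cardinal.{u}} (hreg : κ.IsRegular)
    {P : Type u} [Preorder P] (hP : IsKnaster κ P) {ι : Type u} {A : Set ι} (hA : #A = κ)
    (g : ι → P) : ∃ A' ⊆ A, #A' = κ ∧ ∀ i ∈ A', ∀ j ∈ A', Compat (g i) (g j) := by
  rcases (hA ▸ mk_image_le : #(g '' A) ≤ κ).lt_or_eq with hsmall | hlarge
  · -- fewer than κ values: by regularity one of them is taken κ times
    obtain ⟨a, A', hA'A, hA', hA'a⟩ := infinite_pigeonhole_set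
      (fun i : A => (⟨g i, Set.mem_image_of_mem g i.2⟩ : g '' A)) κ hA.ge hreg.aleph0_le
      (by rwa [hreg.cof_ord])
    have hga : ∀ i ∈ A', g i = a := fun i hi => congrArg Subtype.val (hA'a hi)
    refine ⟨A', hA'A, le_antisymm (hA ▸ mk_le_mk_of_subset hA'A) hA', fun i hi j hj => ?_⟩
    exact ⟨a, (hga i hi).ge, (hga j hj).ge⟩
  · obtain ⟨Y, hYsub, hY, hYcompat⟩ := hP _ hlarge
    refine ⟨A ∩ g ⁻¹' Y, Set.inter_subset_left, le_antisymm ?_ ?_,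
      fun i hi j hj => hYcompat _ hi.2 _ hj.2⟩
    · exact hA ▸ mk_le_mk_of_subset Set.inter_subset_left
    · calc κ = #Y := hY.symm
        _ ≤ #↥(g '' (A ∩ g ⁻¹' Y)) := mk_le_mk_of_subset (by
            rintro y hy
            obtain ⟨i, hi, rfl⟩ := hYsub hy
            exact ⟨i, ⟨hi, hy⟩, rfl⟩)
        _ ≤ #↥(A ∩ g ⁻¹' Y) := mk_image_le

theorem exists_mem_le_toOrd_of_mk_eq {κ : Cardinal.{u}} {B : Set κ.ord.ToType} (hB : #B = κ)
    {β : Ordinal.{u}} (hβ : β < κ.ord) : ∃ i ∈ B, β ≤ (i : Ordinal) := by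
  by_contra! h
  have hsub : B ⊆ Set.Iio (ToType.mk ⟨β, hβ⟩) := fun i hi => by
    rw [Set.mem_Iio, ← ToType.mk.symm.lt_iff_lt, OrderIso.symm_apply_apply]
    exact h i hi
  have := (mk_le_mk_of_subset hsub).trans_lt (mk_Iio_lt _ (by simp))
  simp [hB] at this

namespace TreeOfHeight

variable {κ : Cardinal.{u}}

instance (S : TreeOfHeight κ) : PartialOrder S.carrier := S.po

variable {S : TreeOfHeight κ}

theorem eq_of_le_of_lvl_le {s t : S.carrier} (h : s ≤ t) (hlvl : S.lvl t ≤ S.lvl s) : s = t :=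
  h.lt_or_eq.resolve_left fun hlt => (S.lvl_strictMono s t hlt).not_ge hlvl

theorem eq_of_le_of_le_of_lvl_eq {s s' t : S.carrier} (hs : s ≤ t) (hs' : s' ≤ t)
    (h : S.lvl s = S.lvl s') : s = s' := by
  rcases hs.lt_or_eq with hs | rfl
  · rcases hs'.lt_or_eq with hs' | rfl
    · exact (S.preds t _ (S.lvl_strictMono s t hs)).unique ⟨hs, rfl⟩ ⟨hs', h.symm⟩
    · exact absurd h (S.lvl_strictMono _ _ hs).ne
  · exact (eq_of_le_of_lvl_le hs' h.le).symm

theorem exists_le_lvl_eq {t : S.carrier} {β : Ordinal.{u}} (hβ : β ≤ S.lvl t) :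
    ∃ s ≤ t, S.lvl s = β := by
  rcases hβ.lt_or_eq with hlt | rfl
  · obtain ⟨s, hst, hs⟩ := (S.preds t β hlt).exists
    exact ⟨s, hst.le, hs⟩
  · exact ⟨t, le_rfl, rfl⟩

theorem le_total_of_le_of_le {s s' t : S.carrier} (hs : s ≤ t) (hs' : s' ≤ t) :
    s ≤ s' ∨ s' ≤ s := by
  wlog h : S.lvl s ≤ S.lvl s' generalizing s s'
  · exact (this hs' hs (le_of_not_ge h)).symm
  obtain ⟨u, hus', hu⟩ := exists_le_lvl_eq h
  exact Or.inl (eq_of_le_of_le_of_lvl_eq hs (hus'.trans hs') hu.symm ▸ hus')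

theorem isCofBranch_lowerClosure {C : Set S.carrier} (hC : IsChain (· ≤ ·) C)
    (hlvl : ∀ β < κ.ord, ∃ t ∈ C, β ≤ S.lvl t) : IsCofBranch S (lowerClosure C) := by
  refine ⟨?_, fun β hβ => ?_⟩
  · rintro s ⟨c, hc, hsc⟩ s' ⟨c', hc', hsc'⟩
    rcases hC.total hc hc' with h | h
    · exact le_total_of_le_of_le (hsc.trans h) hsc'
    · exact le_total_of_le_of_le hsc (hsc'.trans h)
  · obtain ⟨c, hc, hβc⟩ := hlvl β hβ
    obtain ⟨s, hsc, hs⟩ := exists_le_lvl_eq hβc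
    exact ⟨s, ⟨c, hc, hsc⟩, hs⟩

end TreeOfHeight

namespace BranchName

variable {P : Type u} [Preorder P] {κ : Cardinal.{u}} {S : TreeOfHeight κ}

theorem le_total_of_compat (N : BranchName P S) {p q : P} {s t : S.carrier} (h : Compat p q)
    (hs : N.F p s) (ht : N.F q t) : s ≤ t ∨ t ≤ s := by
  obtain ⟨c, hcp, hcq⟩ := h
  exact N.forcesChain c s t (N.mono _ _ _ hcp hs) (N.mono _ _ _ hcq ht)

theorem exists_forces_subset_lowerClosure (hreg : κ.IsRegular) (hP : IsKnaster κ P)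
    (N : BranchName P S) {A : Set κ.ord.ToType} (hA : #A = κ) {p : κ.ord.ToType → P}
    {t : κ.ord.ToType → S.carrier} (hlvl : ∀ i, S.lvl (t i) = i) (hF : ∀ i, N.F (p i) (t i)) :
    ∃ i ∈ A, ∀ r ≤ p i, ∀ s, N.F r s → s ∈ lowerClosure (t '' A) := by
  by_contra! h
  obtain ⟨⟨i₀, -⟩⟩ := mk_ne_zero_iff.1 (hA.trans_ne hreg.pos.ne')
  have : Nonempty P := ⟨p i₀⟩
  have : Nonempty S.carrier := ⟨t i₀⟩
  choose! r hrp s hrs hsb using h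
  obtain ⟨A', hA'A, hA', hcompat⟩ := hP.exists_subset_pairwise_compat hreg hA r
  obtain ⟨⟨i, hi⟩⟩ := mk_ne_zero_iff.1 (hA'.trans_ne hreg.pos.ne')
  obtain ⟨j, hj, hij⟩ := exists_mem_le_toOrd_of_mk_eq hA' (S.lvl_lt (s i))
  have htj : t j ∈ lowerClosure (t '' A) := subset_lowerClosure ⟨j, hA'A hj, rfl⟩
  rcases N.le_total_of_compat (hcompat i hi j hj) (hrs i (hA'A hi))
      (N.mono _ _ _ (hrp j (hA'A hj)) (hF j)) with hst | hts
  · exact hsb i (hA'A hi) ((lowerClosure _).lower hst htj)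
  · have : t j = s i := TreeOfHeight.eq_of_le_of_lvl_le hts (hlvl j ▸ hij)
    exact hsb i (hA'A hi) (this ▸ htj)

end BranchName

/-- Baumgartner's branch lemma: a κ-Knaster forcing adds no new cofinal branch
to a tree of height κ: every cofinal branch of the tree in a `P`-generic
extension is in the ground model. -/
theorem knaster_no_new_branch {κ : Cardinal.{u}} (hreg : κ.IsRegular)
    {P : Type u} [PartialOrder P] (hP : IsKnaster κ P)
    (S : TreeOfHeight κ) (N : BranchName P S) :
    ∀ p : P, ∃ q, q ≤ p ∧ ∃ b : Set S.carrier, IsCofBranch S b ∧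
      ∀ r, r ≤ q → ∀ t, N.F r t → t ∈ b := by
  intro p
  choose q hqp t hlvl hF using fun i : κ.ord.ToType => N.cof p i (ToType.mk.symm i).2
  obtain ⟨A, -, hA, hcompat⟩ :=
    hP.exists_subset_pairwise_compat hreg (mk_univ.trans (mk_ord_toType κ)) q
  obtain ⟨i, -, hi⟩ := N.exists_forces_subset_lowerClosure hreg hP hA hlvl hF
  refine ⟨q i, hqp i, lowerClosure (t '' A), TreeOfHeight.isCofBranch_lowerClosure ?_ ?_, hi⟩
  · rintro _ ⟨i, hi, rfl⟩ _ ⟨j, hj, rfl⟩ -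
    exact N.le_total_of_compat (hcompat i hi j hj) (hF i) (hF j)
  · intro β hβ
    obtain ⟨i, hi, hβi⟩ := exists_mem_le_toOrd_of_mk_eq hA hβ
    exact ⟨t i, Set.mem_image_of_mem t hi, (hlvl i).symm ▸ hβi⟩
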